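/- Let T be an n×n real M-matrix. Then I + T is an M-matrix, each matrix I + T·Pᵏ in the iteration P⁰ = O, (I + T·Pᵏ)·x^{k+1} = b, Pᵏ = P(xᵏ) is invertible, and the iteration converges in at most n steps to the unique solution of the piecewise linear system [I + T·P(x)]·x = b; moreover, for any diagonal P with O ≤ P ≤ I the identity I + T·P = I − P + (I + T)·P holds, so the iteration coincides with the Newton-type iteration for the matrix I + T. -/

import Mathlib

open Matrix

/-- Spectral radius of a real matrix: supremum of absolute values of its complex eigenvalues. -/
noncomputable def specRad {n : ℕ} (B : Matrix (Fin n) (Fin n) ℝ) : ℝ :=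
  sSup {r : ℝ | ∃ μ ∈ spectrum ℂ (B.map (fun a => (a : ℂ))), r = ‖μ‖}

/-- `T` is an M-matrix: `T = α•I - B` with `B ≥ O` entrywise and `ρ(B) < α`. -/
def IsMmat {n : ℕ} (T : Matrix (Fin n) (Fin n) ℝ) : Prop :=
  ∃ (α : ℝ) (B : Matrix (Fin n) (Fin n) ℝ),
    (∀ i j, 0 ≤ B i j) ∧ specRad B < α ∧ T = α • (1 : Matrix (Fin n) (Fin n) ℝ) - B

/-- `P(x)`: diagonal matrix with i-th entry `1` if `x i ≥ 0`, else `0`. -/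
noncomputable def Pmat {n : ℕ} (x : Fin n → ℝ) : Matrix (Fin n) (Fin n) ℝ :=
  Matrix.diagonal fun i => if 0 ≤ x i then 1 else 0

/-- Irreducibility of a matrix (strong connectivity of its directed graph). -/
def IsIrred {n : ℕ} (T : Matrix (Fin n) (Fin n) ℝ) : Prop :=
  ∀ S : Finset (Fin n), S.Nonempty → S ≠ Finset.univ → ∃ i ∈ S, ∃ j ∉ S, T i j ≠ 0

/-- Condition T2: `T` is irreducible, `null(Tᵀ) = span(v)`, `null(T) = span(w)` with
`v, w > 0` componentwise, and `T + D` is an M-matrix for every diagonal `D ≥ O`, `D ≠ O`. -/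
def CondT2 {n : ℕ} (T : Matrix (Fin n) (Fin n) ℝ) (v w : Fin n → ℝ) : Prop :=
  IsIrred T ∧ (∀ i, 0 < v i) ∧ (∀ i, 0 < w i) ∧
  LinearMap.ker (Matrix.mulVecLin Tᵀ) = Submodule.span ℝ {v} ∧
  LinearMap.ker (Matrix.mulVecLin T) = Submodule.span ℝ {w} ∧
  (∀ d : Fin n → ℝ, (∀ i, 0 ≤ d i) → d ≠ 0 → IsMmat (T + Matrix.diagonal d))

/-!
Write `T = α • 1 - B` with `B ≥ 0` and `ρ(B) < α`. For a nonnegative diagonal `D` one has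
`1 + T D = (1 - C) E` with `E = 1 + α D` and `0 ≤ C = B D E⁻¹ ≤ α⁻¹ B`. By Gelfand's formula
the powers of `α⁻¹ B`, hence those of `C`, tend to `0`, so `1 - C` is invertible with inverse
`∑ Cᵏ ≥ 0`, and `1 + T D` is invertible with a nonnegative inverse. Every `Pᵏ` is such a `D`.
Nonnegativity of `(1 + T Pᵏ)⁻¹` makes the sets `{i | 0 ≤ xᵏ i}` increase along the iteration,
so they stabilise within `n` steps, and then `x^{k+1}` solves `x + T x⁺ = b`. The solution is
unique because `z⁺ - w⁺ = D (z - w)` for a nonnegative diagonal `D`.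
-/

open Filter Topology
open scoped Pointwise

theorem tendsto_pow_nhds_zero_of_spectralRadius_lt_one {A : Type*} [NormedRing A]
    [NormedAlgebra ℂ A] [CompleteSpace A] {a : A} (ha : spectralRadius ℂ a < 1) :
    Tendsto (fun k => a ^ k) atTop (𝓝 0) := by
  obtain ⟨r, hρr, hr1⟩ := ENNReal.lt_iff_exists_nnreal_btwn.mp ha
  have hgelfand :=
    (spectrum.pow_nnnorm_pow_one_div_tendsto_nhds_spectralRadius a).eventually_lt_const hρr
  have hbound : ∀ᶠ k : ℕ in atTop, ‖a ^ k‖ ≤ (r : ℝ) ^ k := by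
    filter_upwards [hgelfand, eventually_ne_atTop 0] with k hk hk0
    rw [one_div, ENNReal.rpow_inv_lt_iff (by positivity), ENNReal.rpow_natCast] at hk
    exact_mod_cast hk.le
  exact squeeze_zero_norm' hbound
    (tendsto_pow_atTop_nhds_zero_of_lt_one r.2 (by exact_mod_cast hr1))

section SpectralRadius

variable {n : ℕ}

theorem specRad_nonneg (B : Matrix (Fin n) (Fin n) ℝ) : 0 ≤ specRad B :=
  Real.sSup_nonneg (by rintro r ⟨μ, _, rfl⟩; exact norm_nonneg _)

theorem norm_le_specRad {B : Matrix (Fin n) (Fin n) ℝ} {μ : ℂ}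
    (hμ : μ ∈ spectrum ℂ (B.map (fun a => (a : ℂ)))) : ‖μ‖ ≤ specRad B :=
  le_csSup (((Matrix.finite_spectrum _).image (‖·‖)).bddAbove.mono
    (by rintro _ ⟨ν, hν, rfl⟩; exact ⟨ν, hν, rfl⟩)) ⟨μ, hμ, rfl⟩

theorem spectralRadius_map_inv_smul_lt_one {B : Matrix (Fin n) (Fin n) ℝ} {c : ℝ}
    (hc : specRad B < c) : spectralRadius ℂ ((c⁻¹ • B).map (fun a => (a : ℂ))) < 1 := by
  have hc0 : 0 < c := (specRad_nonneg B).trans_lt hc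
  have hspec : spectrum ℂ ((c⁻¹ • B).map (fun a => (a : ℂ))) =
      (c : ℂ)⁻¹ • spectrum ℂ (B.map (fun a => (a : ℂ))) := by
    have hmap :
        (c⁻¹ • B).map (fun a => (a : ℂ)) = (c : ℂ)⁻¹ • B.map (fun a => (a : ℂ)) := by
      ext i j
      simp
    rw [hmap]
    exact spectrum.unit_smul_eq_smul _ (Units.mk0 ((c : ℂ)⁻¹) (by simp [hc0.ne']))
  refine (iSup₂_le fun μ hμ => ?_).trans_lt
    (ENNReal.ofReal_lt_one.mpr ((div_lt_one hc0).mpr hc))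
  rw [hspec] at hμ
  obtain ⟨ν, hν, rfl⟩ := hμ
  rw [← enorm_eq_nnnorm, ← ofReal_norm]
  refine ENNReal.ofReal_le_ofReal ?_
  change ‖(c : ℂ)⁻¹ * ν‖ ≤ _
  rw [norm_mul, norm_inv, Complex.norm_real, Real.norm_of_nonneg hc0.le, inv_mul_eq_div]
  exact div_le_div_of_nonneg_right (norm_le_specRad hν) hc0.le

theorem tendsto_pow_inv_smul_nhds_zero_of_specRad_lt (B : Matrix (Fin n) (Fin n) ℝ) {c : ℝ}
    (hc : specRad B < c) : Tendsto (fun k => (c⁻¹ • B) ^ k) atTop (𝓝 0) := by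
  -- any submultiplicative norm will do; it only serves to apply Gelfand's formula
  let _ : NormedRing (Matrix (Fin n) (Fin n) ℂ) := Matrix.linftyOpNormedRing
  let _ : NormedAlgebra ℂ (Matrix (Fin n) (Fin n) ℂ) := Matrix.linftyOpNormedAlgebra
  set Bc := (c⁻¹ • B).map (fun a : ℝ => (a : ℂ))
  have hρ : spectralRadius ℂ Bc < 1 := spectralRadius_map_inv_smul_lt_one hc
  have hre : ∀ k, (c⁻¹ • B) ^ k = (Bc ^ k).map Complex.re := by
    intro k
    rw [show Bc ^ k = ((c⁻¹ • B) ^ k).map (fun a : ℝ => (a : ℂ)) from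
      (map_pow Complex.ofRealHom.mapMatrix _ k).symm]
    ext i j
    simp
  have hlim := ((continuous_id.matrix_map Complex.continuous_re).tendsto
    (0 : Matrix (Fin n) (Fin n) ℂ)).comp
    (tendsto_pow_nhds_zero_of_spectralRadius_lt_one hρ)
  simp only [id, Function.comp_def, Matrix.map_zero _ Complex.zero_re, ← hre] at hlim
  exact hlim

end SpectralRadius

section Neumann

variable {ι : Type*} [Fintype ι] [DecidableEq ι]

theorem Matrix.pow_apply_le_pow_apply {C B : Matrix ι ι ℝ} (hC : ∀ i j, 0 ≤ C i j)
    (hCB : ∀ i j, C i j ≤ B i j) (k : ℕ) : ∀ i j, (C ^ k) i j ≤ (B ^ k) i j := by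
  induction k with
  | zero => exact fun _ _ => le_rfl
  | succ k ih =>
    intro i j
    rw [pow_succ, pow_succ]
    exact Finset.sum_le_sum fun l _ => mul_le_mul (ih i l) (hCB l j) (hC l j)
      (pow_apply_nonneg (fun i j => (hC i j).trans (hCB i j)) k i l)

theorem Matrix.tendsto_pow_nhds_zero_of_le {C B : Matrix ι ι ℝ} (hC : ∀ i j, 0 ≤ C i j)
    (hCB : ∀ i j, C i j ≤ B i j) (hB : Tendsto (fun k => B ^ k) atTop (𝓝 0)) :
    Tendsto (fun k => C ^ k) atTop (𝓝 0) := by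
  refine tendsto_pi_nhds.mpr fun i => tendsto_pi_nhds.mpr fun j => ?_
  exact squeeze_zero (fun k => pow_apply_nonneg hC k i j)
    (fun k => pow_apply_le_pow_apply hC hCB k i j)
    (tendsto_pi_nhds.mp (tendsto_pi_nhds.mp hB i) j)

theorem Matrix.isUnit_one_sub_of_tendsto_pow {K : Type*} [Field K] [TopologicalSpace K]
    [IsTopologicalRing K] [T2Space K] {C : Matrix ι ι K}
    (hC : Tendsto (fun k => C ^ k) atTop (𝓝 0)) : IsUnit (1 - C) := by
  refine mulVec_injective_iff_isUnit.mp fun v w hvw => sub_eq_zero.mp ?_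
  have hfix : C *ᵥ (v - w) = v - w := by
    rw [sub_mulVec, sub_mulVec, one_mulVec, one_mulVec] at hvw
    rw [mulVec_sub]
    linear_combination -hvw
  have hpow : ∀ k, C ^ k *ᵥ (v - w) = v - w := by
    intro k
    induction k with
    | zero => rw [pow_zero, one_mulVec]
    | succ k ih => rw [pow_succ, ← mulVec_mulVec, hfix, ih]
  have hlim := ((continuous_id.matrix_mulVec (continuous_const (y := v - w))).tendsto 0).comp hC
  simpa only [Function.comp_def, id, hpow, zero_mulVec, tendsto_const_nhds_iff] using hlim

theorem Matrix.inv_one_sub_apply_nonneg {C : Matrix ι ι ℝ} (hC0 : ∀ i j, 0 ≤ C i j)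
    (hC : Tendsto (fun k => C ^ k) atTop (𝓝 0)) (i j : ι) : 0 ≤ (1 - C)⁻¹ i j := by
  have hdet := (isUnit_iff_isUnit_det _).mp (isUnit_one_sub_of_tendsto_pow hC)
  have hpartial : ∀ k, ∑ l ∈ Finset.range k, C ^ l = (1 - C)⁻¹ * (1 - C ^ k) := by
    intro k
    rw [← mul_neg_geom_sum, ← mul_assoc, nonsing_inv_mul _ hdet, one_mul]
  have hlim : Tendsto (fun k => ∑ l ∈ Finset.range k, C ^ l) atTop (𝓝 (1 - C)⁻¹) := by
    simpa only [hpartial, sub_zero, mul_one] using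
      ((tendsto_const_nhds (x := (1 : Matrix ι ι ℝ))).sub hC).const_mul (1 - C)⁻¹
  refine ge_of_tendsto' (tendsto_pi_nhds.mp (tendsto_pi_nhds.mp hlim i) j) fun k => ?_
  rw [sum_apply]
  exact Finset.sum_nonneg fun l _ => pow_apply_nonneg hC0 l i j

end Neumann

namespace IsMmat

variable {n : ℕ} {T : Matrix (Fin n) (Fin n) ℝ}

theorem one_add (hT : IsMmat T) : IsMmat (1 + T) := by
  obtain ⟨α, B, hB, hρ, rfl⟩ := hT
  exact ⟨α + 1, B, hB, by linarith, by rw [add_smul, one_smul]; abel⟩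

/-- With `T = α • 1 - B` and `e = 1 + α • d`, one has
`1 + T * diagonal d = (1 - C) * diagonal e` for `C = B * diagonal (d / e) ≤ α⁻¹ • B`. -/
theorem exists_one_add_mul_diagonal_eq (hT : IsMmat T) {d : Fin n → ℝ} (hd : 0 ≤ d) :
    ∃ (C : Matrix (Fin n) (Fin n) ℝ) (e : Fin n → ℝ), (∀ i j, 0 ≤ C i j) ∧
      Tendsto (fun k => C ^ k) atTop (𝓝 0) ∧ (∀ i, 0 < e i) ∧
      1 + T * diagonal d = (1 - C) * diagonal e := by
  obtain ⟨α, B, hB, hρ, rfl⟩ := hT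
  have hα : 0 < α := (specRad_nonneg B).trans_lt hρ
  set e : Fin n → ℝ := fun i => 1 + α * d i
  have he : ∀ i, 0 < e i := fun i => add_pos_of_pos_of_nonneg one_pos (mul_nonneg hα.le (hd i))
  have hC0 : ∀ i j, 0 ≤ (B * diagonal (d / e)) i j := fun i j => by
    rw [mul_diagonal]
    exact mul_nonneg (hB i j) (div_nonneg (hd j) (he j).le)
  refine ⟨B * diagonal (d / e), e, hC0, ?_, he, ?_⟩
  · refine tendsto_pow_nhds_zero_of_le hC0 (fun i j => ?_)
      (tendsto_pow_inv_smul_nhds_zero_of_specRad_lt B hρ)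
    rw [mul_diagonal, Matrix.smul_apply, smul_eq_mul, mul_comm α⁻¹]
    refine mul_le_mul_of_nonneg_left ?_ (hB i j)
    rw [Pi.div_apply, div_le_iff₀ (he j), inv_mul_eq_div, le_div_iff₀ hα]
    linarith
  · have hde : diagonal (d / e) * diagonal e = diagonal d := by
      rw [diagonal_mul_diagonal]
      congr 1
      ext i
      exact div_mul_cancel₀ _ (he i).ne'
    have he_eq : diagonal e = 1 + α • diagonal d := by
      ext i j
      by_cases h : i = j <;> simp [one_apply, h, e]
    rw [sub_mul 1, one_mul, mul_assoc, hde, he_eq, sub_mul, smul_mul, one_mul]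
    abel

theorem isUnit_one_add_mul_diagonal (hT : IsMmat T) {d : Fin n → ℝ} (hd : 0 ≤ d) :
    IsUnit (1 + T * diagonal d) := by
  obtain ⟨C, e, -, hC, he, heq⟩ := hT.exists_one_add_mul_diagonal_eq hd
  rw [heq]
  exact (isUnit_one_sub_of_tendsto_pow hC).mul
    (isUnit_diagonal.mpr (Pi.isUnit_iff.mpr fun i => (he i).ne'.isUnit))

theorem inv_one_add_mul_diagonal_apply_nonneg (hT : IsMmat T) {d : Fin n → ℝ} (hd : 0 ≤ d)
    (i j : Fin n) : 0 ≤ (1 + T * diagonal d)⁻¹ i j := by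
  obtain ⟨C, e, hC0, hC, he, heq⟩ := hT.exists_one_add_mul_diagonal_eq hd
  have hinv : (diagonal e)⁻¹ = diagonal e⁻¹ := by
    refine inv_eq_left_inv ?_
    rw [diagonal_mul_diagonal, ← diagonal_one]
    congr 1
    ext i
    exact inv_mul_cancel₀ (he i).ne'
  rw [heq, Matrix.mul_inv_rev, hinv, diagonal_mul]
  exact mul_nonneg (inv_nonneg.mpr (he i).le) (inv_one_sub_apply_nonneg hC0 hC i j)

end IsMmat

section PiecewiseLinear

variable {n : ℕ}

theorem Pmat_eq_diagonal_indicator (x : Fin n → ℝ) :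
    Pmat x = diagonal ({i | 0 ≤ x i}.indicator 1) :=
  rfl

theorem indicator_one_nonneg {ι : Type*} (S : Set ι) : 0 ≤ S.indicator (1 : ι → ℝ) :=
  Set.indicator_nonneg fun _ _ => zero_le_one

theorem Pmat_mulVec_self (x : Fin n → ℝ) : Pmat x *ᵥ x = fun i => max (x i) 0 := by
  ext i
  rw [Pmat, mulVec_diagonal]
  split_ifs with h
  · rw [one_mul, max_eq_left h]
  · rw [zero_mul, max_eq_right (not_le.mp h).le]

theorem Pmat_mulVec_indicator_diff (u : Fin n → ℝ) (S : Set (Fin n)) :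
    Pmat u *ᵥ ({i | 0 ≤ u i} \ S).indicator u = ({i | 0 ≤ u i} \ S).indicator u := by
  ext i
  rw [Pmat, mulVec_diagonal]
  split_ifs with h
  · exact one_mul _
  · rw [zero_mul, Set.indicator_of_notMem fun hi => h hi.1]

theorem Pmat_mulVec_self_eq_add {u : Fin n → ℝ} {S : Set (Fin n)} (hS : S ⊆ {i | 0 ≤ u i}) :
    Pmat u *ᵥ u = diagonal (S.indicator 1) *ᵥ u + ({i | 0 ≤ u i} \ S).indicator u := by
  ext i
  rw [Pmat, mulVec_diagonal, Pi.add_apply, mulVec_diagonal]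
  by_cases hS' : i ∈ S
  · have hu : 0 ≤ u i := hS hS'
    simp [hS', hu]
  · by_cases hu : 0 ≤ u i <;> simp [hS', hu]

theorem exists_nonneg_max_zero_sub_max_zero_eq (s t : ℝ) :
    ∃ c, 0 ≤ c ∧ max s 0 - max t 0 = c * (s - t) := by
  rcases lt_trichotomy s t with hst | rfl | hst
  · refine ⟨(max s 0 - max t 0) / (s - t), div_nonneg_of_nonpos ?_ (by linarith),
      (div_mul_cancel₀ _ (by linarith)).symm⟩
    linarith [max_le_max_right 0 hst.le]
  · exact ⟨0, le_rfl, by ring⟩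
  · refine ⟨(max s 0 - max t 0) / (s - t), div_nonneg ?_ (by linarith),
      (div_mul_cancel₀ _ (by linarith)).symm⟩
    linarith [max_le_max_right 0 hst.le]

variable {T : Matrix (Fin n) (Fin n) ℝ}

theorem IsMmat.injective_one_add_mul_Pmat_mulVec (hT : IsMmat T) :
    Function.Injective fun x => (1 + T * Pmat x) *ᵥ x := by
  intro z w h
  simp only [add_mulVec, one_mulVec, ← mulVec_mulVec, Pmat_mulVec_self] at h
  choose c hc0 hc using fun i => exists_nonneg_max_zero_sub_max_zero_eq (z i) (w i)
  have hdiag : diagonal c *ᵥ (z - w) = (fun i => max (z i) 0) - fun i => max (w i) 0 := by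
    ext i
    rw [mulVec_diagonal, Pi.sub_apply, Pi.sub_apply, hc]
  have hker : (1 + T * diagonal c) *ᵥ (z - w) = (1 + T * diagonal c) *ᵥ 0 := by
    rw [add_mulVec, one_mulVec, ← mulVec_mulVec, hdiag, mulVec_sub, mulVec_zero]
    linear_combination h
  exact sub_eq_zero.mp (mulVec_injective_iff_isUnit.mpr (hT.isUnit_one_add_mul_diagonal hc0) hker)

theorem IsMmat.setOf_nonneg_subset_of_step (hT : IsMmat T) {S : Set (Fin n)}
    {u v b : Fin n → ℝ} (hS : S ⊆ {i | 0 ≤ u i})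
    (hu : (1 + T * diagonal (S.indicator 1)) *ᵥ u = b) (hv : (1 + T * Pmat u) *ᵥ v = b) :
    {i | 0 ≤ u i} ⊆ {i | 0 ≤ v i} := by
  have hPy := Pmat_mulVec_indicator_diff u S
  have hPu := Pmat_mulVec_self_eq_add hS
  set y := ({i | 0 ≤ u i} \ S).indicator u
  -- `y` is the newly activated part of `u`; as `(1 + T * Pmat u)⁻¹ ≥ 0`, `v ≥ u - y ≥ 0` on `u ≥ 0`
  have hstep : (1 + T * Pmat u) *ᵥ (v - u + y) = y := by
    rw [mulVec_add, mulVec_sub, hv, ← hu]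
    simp only [add_mulVec, one_mulVec, ← mulVec_mulVec, hPy, hPu, mulVec_add]
    abel
  have hA : IsUnit (1 + T * Pmat u).det := by
    rw [← isUnit_iff_isUnit_det, Pmat_eq_diagonal_indicator]
    exact hT.isUnit_one_add_mul_diagonal (indicator_one_nonneg _)
  have hdiff : v - u + y = (1 + T * Pmat u)⁻¹ *ᵥ y := by
    conv_rhs => rw [← hstep, mulVec_mulVec, nonsing_inv_mul _ hA, one_mulVec]
  intro i hi
  have hinv : 0 ≤ ((1 + T * Pmat u)⁻¹ *ᵥ y) i := by
    rw [Pmat_eq_diagonal_indicator, mulVec, dotProduct]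
    exact Finset.sum_nonneg fun j _ => mul_nonneg
      (hT.inv_one_add_mul_diagonal_apply_nonneg (indicator_one_nonneg _) i j)
      (Set.indicator_nonneg (fun _ hj => hj.1) j)
  have hyi : y i ≤ u i := Set.indicator_apply_le' (fun _ => le_rfl) (fun _ => hi)
  have hvi := congrFun hdiff i
  simp only [Pi.add_apply, Pi.sub_apply] at hvi
  change 0 ≤ v i
  linarith

end PiecewiseLinear

theorem Monotone.exists_le_natCard_apply_succ_eq {α : Type*} [Finite α] {S : ℕ → Set α}
    (hS : Monotone S) : ∃ k ≤ Nat.card α, S (k + 1) = S k := by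
  by_contra! h
  have hcard : ∀ k ≤ Nat.card α + 1, k ≤ (S k).ncard := by
    intro k hk
    induction k with
    | zero => exact Nat.zero_le _
    | succ k ih =>
      have hlt := Set.ncard_lt_ncard ((hS (Nat.le_add_right k 1)).lt_of_ne (h k (by omega)).symm)
      have := ih (by omega)
      omega
  have := (hcard _ le_rfl).trans (Set.ncard_le_card _)
  omega

/-- If `T` is an M-matrix, then `I + T` is an M-matrix; for any diagonal
`P` with `O ≤ P ≤ I` one has `I + T·P = I − P + (I + T)·P` (so the iteration coincides
with the Newton-type iteration for `I + T`); and along the iteration `P⁰ = O`,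
`(I + T·Pᵏ)·x^{k+1} = b`, `Pᵏ = P(xᵏ)`, every matrix `I + T·Pᵏ` is invertible and the
iteration converges in at most `n` steps to the unique solution of `[I + T·P(x)]·x = b`. -/
theorem stmt18 {n : ℕ} (T : Matrix (Fin n) (Fin n) ℝ) (hT : IsMmat T) (b : Fin n → ℝ) :
    IsMmat (1 + T) ∧
    (∀ p : Fin n → ℝ, (∀ i, 0 ≤ p i ∧ p i ≤ 1) →
      1 + T * Matrix.diagonal p =
        1 - Matrix.diagonal p + (1 + T) * Matrix.diagonal p) ∧
    ∀ (x : ℕ → Fin n → ℝ) (P : ℕ → Matrix (Fin n) (Fin n) ℝ),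
      P 0 = 0 → (∀ k, 1 ≤ k → P k = Pmat (x k)) →
      (∀ k, (1 + T * P k) *ᵥ x (k + 1) = b) →
      (∀ k, IsUnit (1 + T * P k)) ∧
      ∃ k ≤ n, (P (k + 1) - P k) *ᵥ x (k + 1) = 0 ∧
        (1 + T * Pmat (x (k + 1))) *ᵥ x (k + 1) = b ∧
        ∀ z : Fin n → ℝ, (1 + T * Pmat z) *ᵥ z = b → z = x (k + 1) := by
  refine ⟨hT.one_add, fun p _ => by rw [add_mul, one_mul]; abel, fun x P hP0 hP hx => ?_⟩
  set S : ℕ → Set (Fin n) := fun k => if k = 0 then ∅ else {i | 0 ≤ x k i}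
  have hPS : ∀ k, P k = diagonal ((S k).indicator 1) := by
    rintro (_ | k)
    · simp [S, hP0]
    · simp [S, hP (k + 1) (by omega), Pmat_eq_diagonal_indicator]
  have hsucc : ∀ k, S k ⊆ S (k + 1) := by
    intro k
    induction k with
    | zero => exact Set.empty_subset _
    | succ k ih =>
      refine hT.setOf_nonneg_subset_of_step (b := b) ih ?_ ?_
      · rw [← hPS]; exact hx k
      · rw [← hP (k + 1) (by omega)]; exact hx (k + 1)
  obtain ⟨k, hkn, hk⟩ := (monotone_nat_of_le_succ hsucc).exists_le_natCard_apply_succ_eq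
  rw [Nat.card_eq_fintype_card, Fintype.card_fin] at hkn
  have hPk : P (k + 1) = P k := by rw [hPS, hPS, hk]
  have hsol : (1 + T * Pmat (x (k + 1))) *ᵥ x (k + 1) = b := by
    rw [← hP (k + 1) (by omega), hPk]
    exact hx k
  refine ⟨fun k => ?_, k, hkn, by rw [hPk, sub_self, zero_mulVec], hsol,
    fun z hz => hT.injective_one_add_mul_Pmat_mulVec (hz.trans hsol.symm)⟩
  rw [hPS]
  exact hT.isUnit_one_add_mul_diagonal (indicator_one_nonneg _)
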